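/- Let X = (I,P) be a probabilistic coherence space and let t : Mfin(I) → [0,∞) satisfy Σ_μ t_μ x^μ ≤ 1 for all x ∈ P. Let p ∈ [0,1), let x ≤ y ∈ P (pointwise) with ‖y‖_X ≤ p, and define h : [0,1] → [0,1] by h(θ) = Σ_μ t_μ (x+θ(y−x))^μ. Then h is well defined and differentiable on [0,1] (one-sidedly at the endpoints), with h'(θ) = Σ_{a∈I} Dt(x+θ(y−x))_a (y−x)_a for all θ ∈ [0,1], where Dt(z)_a = Σ_μ (μ(a)+1) t_{μ+[a]} z^μ. -/

import Mathlib

open scoped ENNReal NNReal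

noncomputable section

/-- ⟨u,u'⟩ = Σ_i u_i u'_i in [0,∞]. -/
def dotE {I : Type*} (u v : I → ℝ≥0∞) : ℝ≥0∞ := ∑' i, u i * v i

/-- The orthogonal P⊥ of a set P ⊆ [0,∞]^I. -/
def orthE {I : Type*} (P : Set (I → ℝ≥0∞)) : Set (I → ℝ≥0∞) :=
  {v | ∀ u ∈ P, dotE u v ≤ 1}

/-- (I,P) is a probabilistic coherence space. -/
structure IsPCS {I : Type*} (P : Set (I → ℝ≥0∞)) : Prop where
  biorth : orthE (orthE P) = P
  nonzero : ∀ a, ∃ x ∈ P, 0 < x a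
  bounded : ∀ a, ∃ m : ℝ≥0, ∀ x ∈ P, x a ≤ (m : ℝ≥0∞)

/-- The norm ‖x‖_X = inf{r > 0 | x ∈ rP}. -/
def pnorm {I : Type*} (P : Set (I → ℝ≥0∞)) (x : I → ℝ≥0∞) : ℝ≥0∞ :=
  sInf {r : ℝ≥0∞ | 0 < r ∧ ∃ z ∈ P, x = r • z}

/-- x^μ = Π_{a∈I} x_a^{μ(a)}. -/
def mpow {I : Type*} (x : I → ℝ≥0∞) (μ : Multiset I) : ℝ≥0∞ := (μ.map x).prod

/-- The derivative Dt(z)_a = Σ_μ (μ(a)+1) t_{μ+[a]} z^μ of a scalar power series. -/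
def matDeriv1 {I : Type*} [DecidableEq I] (t : Multiset I → ℝ≥0∞)
    (z : I → ℝ≥0∞) : I → ℝ≥0∞ :=
  fun a => ∑' μ : Multiset I, ((μ.count a : ℝ≥0∞) + 1) * t (μ + {a}) * mpow z μ

/-- The segment z(θ) = x + θ(y−x). -/
def zseg {I : Type*} (x y : I → ℝ≥0∞) (θ : ℝ) : I → ℝ≥0∞ :=
  fun a => x a + ENNReal.ofReal θ * (y a - x a)

/-- h(θ) = Σ_μ t_μ (x+θ(y−x))^μ, as a real-valued function. -/
def hseg {I : Type*} (t : Multiset I → ℝ≥0∞) (x y : I → ℝ≥0∞) (θ : ℝ) : ℝ :=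
  (∑' μ : Multiset I, t μ * mpow (zseg x y θ) μ).toReal

/-!
Write `y = r • z` with `z ∈ P` and `r < 1` (possible since `‖y‖ < 1`), and pick `T > 1` with
`q = T r < 1`. For `θ ≤ T` the point `x + θ (y - x)` lies below `T y = q • z`, and `q • z ∈ P`
because `P` is downward closed. Since `n qⁿ ≤ (1 - q)⁻¹`, the series `Σ t_μ |μ| (q z)^μ`, which
dominates the termwise derivatives, converges; so on `(-1, T)` the series can be differentiated
term by term. Grouping the derivative of `Π_{a ∈ μ} z_a` by the differentiated variable `a`, i.e.
writing `μ = ν + [a]`, turns it into `Σ_a Dt(z)_a (y - x)_a`.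
-/

theorem natCast_mul_pow_le_inv_one_sub {q : ℝ≥0∞} (hq : q ≤ 1) (n : ℕ) :
    (n : ℝ≥0∞) * q ^ n ≤ (1 - q)⁻¹ :=
  calc (n : ℝ≥0∞) * q ^ n = ∑ _k ∈ Finset.range n, q ^ n := by simp
    _ ≤ ∑ k ∈ Finset.range n, q ^ k :=
        Finset.sum_le_sum fun k hk => pow_le_pow_right_of_le_one' hq (Finset.mem_range.mp hk).le
    _ ≤ ∑' k, q ^ k := ENNReal.sum_le_tsum _
    _ = (1 - q)⁻¹ := ENNReal.tsum_geometric q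

section Mpow

variable {I : Type*}

theorem mpow_cons (z : I → ℝ≥0∞) (a : I) (μ : Multiset I) :
    mpow z (a ::ₘ μ) = z a * mpow z μ := by
  simp [mpow]

theorem mpow_mono {z z' : I → ℝ≥0∞} (h : z ≤ z') (μ : Multiset I) : mpow z μ ≤ mpow z' μ :=
  Multiset.prod_map_le_prod_map _ _ fun a _ => h a

theorem mpow_ne_top {z : I → ℝ≥0∞} (h : ∀ a, z a ≠ ⊤) (μ : Multiset I) : mpow z μ ≠ ⊤ := by
  induction μ using Multiset.induction with
  | empty => simp [mpow]
  | cons a μ ih => rw [mpow_cons]; exact ENNReal.mul_ne_top (h a) ih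

theorem toReal_mpow (z : I → ℝ≥0∞) (μ : Multiset I) :
    (mpow z μ).toReal = (μ.map fun a => (z a).toReal).prod := by
  rw [mpow, ← Function.comp_def, ← Multiset.map_map]
  exact map_multiset_prod ENNReal.toRealHom (μ.map z)

theorem mpow_const_mul (c : ℝ≥0∞) (z : I → ℝ≥0∞) (μ : Multiset I) :
    mpow (fun a => c * z a) μ = c ^ Multiset.card μ * mpow z μ := by
  simp [mpow, Multiset.prod_map_mul, Multiset.map_const']

theorem tsum_mul_mpow_mono (t : Multiset I → ℝ≥0∞) {z z' : I → ℝ≥0∞} (h : z ≤ z') :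
    ∑' μ, t μ * mpow z μ ≤ ∑' μ, t μ * mpow z' μ :=
  ENNReal.tsum_le_tsum fun μ => mul_le_mul_right (mpow_mono h μ) _

theorem tsum_mul_card_mul_mpow_const_mul_le (t : Multiset I → ℝ≥0∞)
    (z : I → ℝ≥0∞) {q : ℝ≥0∞} (hq : q ≤ 1) :
    ∑' μ, t μ * Multiset.card μ * mpow (fun a => q * z a) μ
      ≤ (1 - q)⁻¹ * ∑' μ, t μ * mpow z μ := by
  rw [← ENNReal.tsum_mul_left]
  refine ENNReal.tsum_le_tsum fun μ => ?_
  calc t μ * Multiset.card μ * mpow (fun a => q * z a) μ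
      = (Multiset.card μ * q ^ Multiset.card μ) * (t μ * mpow z μ) := by
        rw [mpow_const_mul]; ring
    _ ≤ (1 - q)⁻¹ * (t μ * mpow z μ) :=
        mul_le_mul_left (natCast_mul_pow_le_inv_one_sub hq _) _

end Mpow

section Reindex

variable {I : Type*} [DecidableEq I]

theorem multiset_sum_map_eq_tsum_count (μ : Multiset I) (F : I → ℝ≥0∞) :
    (μ.map F).sum = ∑' a, μ.count a * F a := by
  rw [Finset.sum_multiset_map_count, tsum_eq_sum (s := μ.toFinset)]
  · simp [nsmul_eq_mul]
  · intro a ha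
    simp [Multiset.count_eq_zero.mpr (by simpa using ha)]

theorem multiset_sum_map_ne_top {μ : Multiset I} {F : I → ℝ≥0∞} (h : ∀ a ∈ μ, F a ≠ ⊤) :
    (μ.map F).sum ≠ ⊤ := by
  rw [Finset.sum_multiset_map_count]
  refine ENNReal.sum_ne_top.mpr fun a ha => ?_
  rw [nsmul_eq_mul]
  exact ENNReal.mul_ne_top (ENNReal.natCast_ne_top _) (h a (Multiset.mem_toFinset.mp ha))

theorem toReal_multiset_sum_map {μ : Multiset I} {F : I → ℝ≥0∞} (h : ∀ a ∈ μ, F a ≠ ⊤) :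
    (μ.map F).sum.toReal = (μ.map fun a => (F a).toReal).sum := by
  rw [Finset.sum_multiset_map_count, Finset.sum_multiset_map_count, ENNReal.toReal_sum]
  · simp
  · intro a ha
    rw [nsmul_eq_mul]
    exact ENNReal.mul_ne_top (ENNReal.natCast_ne_top _) (h a (Multiset.mem_toFinset.mp ha))

theorem tsum_count_mul_eq_tsum_add_singleton (a : I) (f : Multiset I → ℝ≥0∞) :
    ∑' μ, μ.count a * f μ = ∑' ν, (ν.count a + 1) * f (ν + {a}) := by
  have hsupp : Function.support (fun μ => μ.count a * f μ) ⊆ Set.range (· + {a}) := by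
    intro μ hμ
    have ha : a ∈ μ := by
      by_contra ha
      simp [Multiset.count_eq_zero.mpr ha] at hμ
    exact ⟨μ.erase a, by simp only [add_comm _ {a}, Multiset.singleton_add, Multiset.cons_erase ha]⟩
  rw [← (add_left_injective {a}).tsum_eq hsupp]
  simp

theorem tsum_mul_sum_mpow_erase_mul (t : Multiset I → ℝ≥0∞) (z d : I → ℝ≥0∞) :
    ∑' μ, t μ * (μ.map fun a => mpow z (μ.erase a) * d a).sum
      = ∑' a, matDeriv1 t z a * d a := by
  simp_rw [multiset_sum_map_eq_tsum_count, ← ENNReal.tsum_mul_left]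
  rw [ENNReal.tsum_comm]
  refine tsum_congr fun a => ?_
  simp_rw [mul_left_comm (t _), tsum_count_mul_eq_tsum_add_singleton a, matDeriv1,
    ← ENNReal.tsum_mul_right]
  refine tsum_congr fun ν => ?_
  simp only [Multiset.erase_add_right_pos ν (Multiset.mem_singleton_self a),
    Multiset.erase_singleton, add_zero]
  ring

end Reindex

section RealSeries

variable {I : Type*}

theorem abs_multiset_prod_map_le {V W : I → ℝ} (h : ∀ b, |V b| ≤ W b) (μ : Multiset I) :
    |(μ.map V).prod| ≤ (μ.map W).prod := by
  change absHom (μ.map V).prod ≤ _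
  rw [map_multiset_prod, Multiset.map_map]
  exact Multiset.prod_map_le_prod_map₀ _ _ (fun b _ => abs_nonneg _) fun b _ => h b

variable [DecidableEq I]

theorem HasDerivAt.multiset_prod_map {f : I → ℝ → ℝ} {f' : I → ℝ} {μ : Multiset I} {θ : ℝ}
    (h : ∀ a ∈ μ, HasDerivAt (f a) (f' a) θ) :
    HasDerivAt (fun θ => (μ.map (f · θ)).prod)
      (μ.map fun a => ((μ.erase a).map (f · θ)).prod * f' a).sum θ := by
  refine (HasFDerivAt.multiset_prod fun a ha => (h a ha).hasFDerivAt).hasDerivAt.congr_deriv ?_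
  rw [← ContinuousLinearMap.apply_apply (𝕜 := ℝ) (1 : ℝ), map_multiset_sum, Multiset.map_map]
  simp [mul_comm]

theorem abs_multiset_sum_prod_erase_mul_le {V D W : I → ℝ} (hV : ∀ b, |V b| ≤ W b)
    (hD : ∀ b, |D b| ≤ W b) (μ : Multiset I) :
    |(μ.map fun a => ((μ.erase a).map V).prod * D a).sum|
      ≤ Multiset.card μ * (μ.map W).prod := by
  have hterm : ∀ a ∈ μ, |((μ.erase a).map V).prod * D a| ≤ (μ.map W).prod := by
    intro a ha
    rw [abs_mul, ← Multiset.prod_map_erase (f := W) ha, mul_comm (W a)]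
    exact mul_le_mul (abs_multiset_prod_map_le hV _) (hD a) (abs_nonneg _)
      ((abs_nonneg _).trans (abs_multiset_prod_map_le hV _))
  calc |(μ.map fun a => ((μ.erase a).map V).prod * D a).sum|
      ≤ (μ.map fun a => |((μ.erase a).map V).prod * D a|).sum := by
        simpa [Multiset.map_map] using
          Multiset.abs_sum_le_sum_abs (s := μ.map fun a => ((μ.erase a).map V).prod * D a)
    _ ≤ Multiset.card μ * (μ.map W).prod := by
        refine (Multiset.sum_le_card_nsmul _ _ (Multiset.forall_mem_map_iff.mpr hterm)).trans_eq ?_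
        rw [Multiset.card_map, nsmul_eq_mul]

theorem hasDerivAt_tsum_mul_prod_affine {c : Multiset I → ℝ} {X D W : I → ℝ} {U : Set ℝ}
    (hU : IsOpen U) (hU' : IsPreconnected U) (hXW : ∀ θ ∈ U, ∀ b, |X b + θ * D b| ≤ W b)
    (hDW : ∀ b, |D b| ≤ W b) (hsum : Summable fun μ => |c μ| * (Multiset.card μ * (μ.map W).prod))
    {θ₀ : ℝ} (hθ₀ : θ₀ ∈ U)
    (hsum₀ : Summable fun μ => c μ * (μ.map fun a => X a + θ₀ * D a).prod)
    {θ : ℝ} (hθ : θ ∈ U) :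
    HasDerivAt (fun θ => ∑' μ, c μ * (μ.map fun a => X a + θ * D a).prod)
      (∑' μ, c μ * (μ.map fun a => ((μ.erase a).map fun b => X b + θ * D b).prod * D a).sum)
      θ := by
  refine hasDerivAt_tsum_of_isPreconnected
    (g := fun μ θ => c μ * (μ.map fun a => X a + θ * D a).prod)
    (g' := fun μ θ =>
      c μ * (μ.map fun a => ((μ.erase a).map fun b => X b + θ * D b).prod * D a).sum)
    hsum hU hU' (fun μ θ _ => ?_) (fun μ θ hθ => ?_) hθ₀ hsum₀ hθ
  · exact (HasDerivAt.multiset_prod_map fun a _ =>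
      (hasDerivAt_mul_const (D a)).const_add (X a)).const_mul (c μ)
  · rw [Real.norm_eq_abs, abs_mul]
    exact mul_le_mul_of_nonneg_left (abs_multiset_sum_prod_erase_mul_le (hXW θ hθ) hDW μ)
      (abs_nonneg _)

end RealSeries

section Segment

variable {I : Type*} {x y : I → ℝ≥0∞}

theorem zseg_mono {θ θ' : ℝ} (h : θ ≤ θ') : zseg x y θ ≤ zseg x y θ' :=
  fun a => by unfold zseg; gcongr

theorem zseg_le_ofReal_mul (hxy : x ≤ y) {T : ℝ} (hT : 1 ≤ T) (a : I) :
    zseg x y T a ≤ ENNReal.ofReal T * y a :=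
  calc x a + ENNReal.ofReal T * (y a - x a)
      ≤ ENNReal.ofReal T * x a + ENNReal.ofReal T * (y a - x a) :=
        add_le_add_left (le_mul_of_one_le_left' (ENNReal.one_le_ofReal.mpr hT)) _
    _ = ENNReal.ofReal T * y a := by rw [← mul_add, add_tsub_cancel_of_le (hxy a)]

theorem zseg_ne_top (hx : ∀ a, x a ≠ ⊤) (hd : ∀ a, y a - x a ≠ ⊤) (θ : ℝ) (a : I) :
    zseg x y θ a ≠ ⊤ :=
  ENNReal.add_ne_top.mpr ⟨hx a, ENNReal.mul_ne_top ENNReal.ofReal_ne_top (hd a)⟩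

theorem toReal_zseg (hx : ∀ a, x a ≠ ⊤) (hd : ∀ a, y a - x a ≠ ⊤) {θ : ℝ} (hθ : 0 ≤ θ)
    (a : I) : (zseg x y θ a).toReal = (x a).toReal + θ * (y a - x a).toReal := by
  rw [zseg, ENNReal.toReal_add (hx a) (ENNReal.mul_ne_top ENNReal.ofReal_ne_top (hd a)),
    ENNReal.toReal_mul, ENNReal.toReal_ofReal hθ]

theorem toReal_mpow_zseg (hx : ∀ a, x a ≠ ⊤) (hd : ∀ a, y a - x a ≠ ⊤) {θ : ℝ} (hθ : 0 ≤ θ)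
    (ν : Multiset I) :
    (mpow (zseg x y θ) ν).toReal
      = (ν.map fun a => (x a).toReal + θ * (y a - x a).toReal).prod := by
  rw [toReal_mpow]
  simp only [toReal_zseg hx hd hθ]

theorem hseg_eq_tsum_prod {t : Multiset I → ℝ≥0∞} (htfin : ∀ μ, t μ ≠ ⊤)
    (hx : ∀ a, x a ≠ ⊤) (hd : ∀ a, y a - x a ≠ ⊤) {θ : ℝ} (hθ : 0 ≤ θ) :
    hseg t x y θ
      = ∑' μ, (t μ).toReal * (μ.map fun a => (x a).toReal + θ * (y a - x a).toReal).prod := by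
  rw [hseg, ENNReal.tsum_toReal_eq fun μ =>
    ENNReal.mul_ne_top (htfin μ) (mpow_ne_top (zseg_ne_top hx hd θ) μ)]
  exact tsum_congr fun μ => by rw [ENNReal.toReal_mul, toReal_mpow_zseg hx hd hθ]

variable [DecidableEq I]

theorem toReal_tsum_matDeriv1_mul_eq {t : Multiset I → ℝ≥0∞} (htfin : ∀ μ, t μ ≠ ⊤)
    (hx : ∀ a, x a ≠ ⊤) (hd : ∀ a, y a - x a ≠ ⊤) {θ : ℝ} (hθ : 0 ≤ θ) :
    (∑' a, matDeriv1 t (zseg x y θ) a * (y a - x a)).toReal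
      = ∑' μ, (t μ).toReal * (μ.map fun a => ((μ.erase a).map fun b =>
          (x b).toReal + θ * (y b - x b).toReal).prod * (y a - x a).toReal).sum := by
  have hfin : ∀ μ : Multiset I, ∀ a ∈ μ, mpow (zseg x y θ) (μ.erase a) * (y a - x a) ≠ ⊤ :=
    fun μ a _ => ENNReal.mul_ne_top (mpow_ne_top (zseg_ne_top hx hd θ) _) (hd a)
  rw [← tsum_mul_sum_mpow_erase_mul, ENNReal.tsum_toReal_eq fun μ =>
    ENNReal.mul_ne_top (htfin μ) (multiset_sum_map_ne_top (hfin μ))]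
  refine tsum_congr fun μ => ?_
  rw [ENNReal.toReal_mul, toReal_multiset_sum_map (hfin μ)]
  simp only [ENNReal.toReal_mul, toReal_mpow_zseg hx hd hθ]

/- `zseg` reads `θ` through `ENNReal.ofReal`, so it is constant for `θ ≤ 0`. To differentiate at
the endpoint `0` we pass to the real series, whose terms are polynomials in `θ` on all of
`(-1, T)`. -/
theorem hasDerivWithinAt_hseg {t : Multiset I → ℝ≥0∞} (htfin : ∀ μ, t μ ≠ ⊤)
    {w : I → ℝ≥0∞} {T : ℝ} (hT : 1 < T) (hw : ∀ a, w a ≠ ⊤) (hTw : zseg x y T ≤ w)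
    (hsum : ∑' μ, t μ * Multiset.card μ * mpow w μ ≠ ⊤) (hsum₀ : ∑' μ, t μ * mpow w μ ≠ ⊤)
    {θ : ℝ} (hθ : θ ∈ Set.Icc (0 : ℝ) 1) :
    HasDerivWithinAt (hseg t x y)
      ((∑' a, matDeriv1 t (zseg x y θ) a * (y a - x a)).toReal) (Set.Icc 0 1) θ := by
  set X : I → ℝ := fun a => (x a).toReal
  set D : I → ℝ := fun a => (y a - x a).toReal
  have hxw : x ≤ w := fun a => le_self_add.trans (hTw a)
  have hdw : ∀ a, y a - x a ≤ w a := fun a =>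
    (le_mul_of_one_le_left' (ENNReal.one_le_ofReal.mpr hT.le)).trans (le_add_self.trans (hTw a))
  have hx : ∀ a, x a ≠ ⊤ := fun a => ne_top_of_le_ne_top (hw a) (hxw a)
  have hd : ∀ a, y a - x a ≠ ⊤ := fun a => ne_top_of_le_ne_top (hw a) (hdw a)
  have hXW : ∀ θ' ∈ Set.Ioo (-1) T, ∀ b, |X b + θ' * D b| ≤ (w b).toReal := by
    intro θ' hθ' b
    have hD : 0 ≤ D b := ENNReal.toReal_nonneg
    calc |X b + θ' * D b| ≤ X b + T * D b := by
          rw [abs_le]; constructor <;> nlinarith [hθ'.1, hθ'.2, (ENNReal.toReal_nonneg : 0 ≤ X b)]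
      _ = (zseg x y T b).toReal := (toReal_zseg hx hd (by linarith) b).symm
      _ ≤ (w b).toReal := ENNReal.toReal_mono (hw b) (hTw b)
  have hDW : ∀ b, |D b| ≤ (w b).toReal := fun b => by
    rw [abs_of_nonneg ENNReal.toReal_nonneg]; exact ENNReal.toReal_mono (hw b) (hdw b)
  have hsumR : Summable fun μ =>
      |(t μ).toReal| * (Multiset.card μ * (μ.map fun b => (w b).toReal).prod) := by
    refine (ENNReal.summable_toReal hsum).congr fun μ => ?_
    rw [abs_of_nonneg ENNReal.toReal_nonneg, ENNReal.toReal_mul, ENNReal.toReal_mul,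
      ENNReal.toReal_natCast, toReal_mpow, mul_assoc]
  have hsumR₀ : Summable fun μ => (t μ).toReal * (μ.map fun a => X a + 0 * D a).prod := by
    refine (ENNReal.summable_toReal (ne_top_of_le_ne_top hsum₀ (tsum_mul_mpow_mono t hxw))).congr
      fun μ => ?_
    simp [toReal_mpow, X]
  have hderiv := hasDerivAt_tsum_mul_prod_affine isOpen_Ioo isPreconnected_Ioo hXW hDW hsumR
    (θ₀ := 0) ⟨by norm_num, by linarith⟩ hsumR₀ (θ := θ) ⟨by linarith [hθ.1], by linarith [hθ.2]⟩
  rw [toReal_tsum_matDeriv1_mul_eq htfin hx hd hθ.1]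
  exact hderiv.hasDerivWithinAt.congr (fun θ' hθ' => hseg_eq_tsum_prod htfin hx hd hθ'.1)
    (hseg_eq_tsum_prod htfin hx hd hθ.1)

end Segment

section PCS

variable {I : Type*} {P : Set (I → ℝ≥0∞)}

theorem mem_orthE_of_le {u v : I → ℝ≥0∞} (huv : u ≤ v) (hv : v ∈ orthE P) : u ∈ orthE P :=
  fun z hz => (ENNReal.tsum_le_tsum fun i => mul_le_mul_right (huv i) (z i)).trans (hv z hz)

theorem IsPCS.mem_of_le (hP : IsPCS P) {u v : I → ℝ≥0∞} (huv : u ≤ v) (hv : v ∈ P) : u ∈ P := by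
  rw [← hP.biorth] at hv ⊢
  exact mem_orthE_of_le huv hv

theorem IsPCS.ne_top (hP : IsPCS P) {v : I → ℝ≥0∞} (hv : v ∈ P) (a : I) : v a ≠ ⊤ := by
  obtain ⟨m, hm⟩ := hP.bounded a
  exact ne_top_of_le_ne_top ENNReal.coe_ne_top (hm v hv)

theorem exists_eq_smul_of_pnorm_lt_one {y : I → ℝ≥0∞} (h : pnorm P y < 1) :
    ∃ r : ℝ≥0∞, r < 1 ∧ ∃ z ∈ P, y = r • z := by
  obtain ⟨r, ⟨-, z, hz, rfl⟩, hr⟩ := sInf_lt_iff.mp h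
  exact ⟨r, hr, z, hz, rfl⟩

end PCS

theorem exists_one_lt_ofReal_mul_lt_one {r : ℝ≥0∞} (hr : r < 1) :
    ∃ T : ℝ, 1 < T ∧ ENNReal.ofReal T * r < 1 := by
  obtain ⟨ρ, hρ, rfl⟩ : ∃ ρ : ℝ, 0 ≤ ρ ∧ ENNReal.ofReal ρ = r :=
    ⟨r.toReal, ENNReal.toReal_nonneg, ENNReal.ofReal_toReal hr.ne_top⟩
  have hρ1 : ρ < 1 := by simpa [ENNReal.ofReal_lt_one] using hr
  refine ⟨2 / (1 + ρ), (one_lt_div (by linarith)).mpr (by linarith), ?_⟩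
  rw [← ENNReal.ofReal_mul (by positivity), ENNReal.ofReal_lt_one, div_mul_eq_mul_div,
    div_lt_one (by linarith)]
  linarith

theorem stmt10_general {I : Type*} [DecidableEq I]
    (P : Set (I → ℝ≥0∞)) (hP : IsPCS P)
    (t : Multiset I → ℝ≥0∞) (htfin : ∀ μ, t μ ≠ ⊤)
    (ht : ∀ z ∈ P, ∑' μ : Multiset I, t μ * mpow z μ ≤ 1)
    (p : ℝ≥0∞) (hp : p < 1)
    (x y : I → ℝ≥0∞) (hxy : x ≤ y)
    (hyp : pnorm P y ≤ p) :
    (∀ θ ∈ Set.Icc (0:ℝ) 1, hseg t x y θ ∈ Set.Icc (0:ℝ) 1) ∧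
    ∀ θ ∈ Set.Icc (0:ℝ) 1,
      HasDerivWithinAt (hseg t x y)
        ((∑' a : I, matDeriv1 t (zseg x y θ) a * (y a - x a)).toReal)
        (Set.Icc (0:ℝ) 1) θ := by
  obtain ⟨r, hr, z, hz, rfl⟩ := exists_eq_smul_of_pnorm_lt_one (hyp.trans_lt hp)
  obtain ⟨T, hT, hq⟩ := exists_one_lt_ofReal_mul_lt_one hr
  set w : I → ℝ≥0∞ := fun a => (ENNReal.ofReal T * r) * z a
  have hTw : zseg x (r • z) T ≤ w := fun a =>
    (zseg_le_ofReal_mul hxy hT.le a).trans_eq (mul_assoc _ _ _).symm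
  have hwP : w ∈ P := hP.mem_of_le (fun a => mul_le_of_le_one_left' hq.le) hz
  have hsum₀ : ∑' μ, t μ * mpow w μ ≤ 1 := ht w hwP
  have hsum : ∑' μ, t μ * Multiset.card μ * mpow w μ ≠ ⊤ :=
    ne_top_of_le_ne_top (ENNReal.mul_ne_top (ENNReal.inv_ne_top.mpr (tsub_pos_of_lt hq).ne')
      (ne_top_of_le_ne_top ENNReal.one_ne_top (ht z hz)))
      (tsum_mul_card_mul_mpow_const_mul_le t z hq.le)
  refine ⟨fun θ hθ => ⟨ENNReal.toReal_nonneg, ?_⟩, fun θ hθ => ?_⟩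
  · have hle : ∑' μ, t μ * mpow (zseg x (r • z) θ) μ ≤ 1 :=
      (tsum_mul_mpow_mono t ((zseg_mono (hθ.2.trans hT.le)).trans hTw)).trans hsum₀
    simpa [hseg] using ENNReal.toReal_mono ENNReal.one_ne_top hle
  · exact hasDerivWithinAt_hseg htfin hT (hP.ne_top hwP) hTw hsum
      (ne_top_of_le_ne_top ENNReal.one_ne_top hsum₀) hθ

/-- For t : !X ⊸ 1, p ∈ [0,1), x ≤ y ∈ P, ‖y‖_X ≤ p, the function
h(θ) = Σ_μ t_μ (x+θ(y−x))^μ maps [0,1] into [0,1] and is differentiable on [0,1]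
(one-sidedly at the endpoints), with h'(θ) = Σ_a Dt(x+θ(y−x))_a (y−x)_a. -/
theorem stmt10 {I : Type*} [Countable I] [DecidableEq I]
    (P : Set (I → ℝ≥0∞)) (hP : IsPCS P)
    (t : Multiset I → ℝ≥0∞) (htfin : ∀ μ, t μ ≠ ⊤)
    (ht : ∀ z ∈ P, ∑' μ : Multiset I, t μ * mpow z μ ≤ 1)
    (p : ℝ≥0∞) (hp : p < 1)
    (x y : I → ℝ≥0∞) (hx : x ∈ P) (hy : y ∈ P) (hxy : x ≤ y)
    (hyp : pnorm P y ≤ p) :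
    (∀ θ ∈ Set.Icc (0:ℝ) 1, hseg t x y θ ∈ Set.Icc (0:ℝ) 1) ∧
    ∀ θ ∈ Set.Icc (0:ℝ) 1,
      HasDerivWithinAt (hseg t x y)
        ((∑' a : I, matDeriv1 t (zseg x y θ) a * (y a - x a)).toReal)
        (Set.Icc (0:ℝ) 1) θ :=
  stmt10_general P hP t htfin ht p hp x y hxy hyp
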